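/- arXiv:1009.5168 — 3 statements merged into one kernel-verified Lean document; each statement's English description precedes it below -/
import Mathlib

section
/- Let C and C' be two k-clusterings (partitions into k labeled parts) of a finite set S of size n. If dist(C, C') = d, where dist is the fraction of misclassified points under the optimal bijection between clusters, then the F-measure satisfies F(C, C') ≥ 1 - 3d/2. -/
/-!
Match every cluster `C i` with its partner `C' (σ i)` under the optimal bijection `σ` and bound the
maximum in the F-measure by that partner. For finite sets `A`, `B` one has
`|A| · pr A B ≥ |A ∩ B| - |B \ A| / 2`. Summed over the matched pairs, `∑ |A ∩ B| = n - n d`, and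
since both clusterings cover all `n` points, `∑ |B \ A| = ∑ |A \ B| = n d`; together `n F ≥ n - 3 n d / 2`.
-/

open Finset

/-- Harmonic mean of precision and recall for matching cluster `A` to cluster `B`. -/
noncomputable def pr {S : Type*} [DecidableEq S] (A B : Finset S) : ℝ :=
  2 * ((A ∩ B).card : ℝ) / ((A.card : ℝ) + (B.card : ℝ))

lemma sum_card_eq_card_of_existsUnique_mem {S ι : Type*} [Fintype S] [Fintype ι] [DecidableEq ι]
    {C : ι → Finset S} (hC : ∀ x, ∃! i, x ∈ C i) :
    ∑ i, #(C i) = Fintype.card S := by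
  choose f hf hfu using hC
  rw [← card_univ, card_eq_sum_card_fiberwise fun x _ => mem_univ (f x)]
  refine sum_congr rfl fun i _ => congrArg card ?_
  ext x
  simp only [mem_filter, mem_univ, true_and]
  exact ⟨fun hx => (hfu x i hx).symm, fun hx => hx ▸ hf x⟩

section

variable {S ι : Type*} [DecidableEq S]

lemma card_inter_sub_half_card_sdiff_le_card_mul_pr (A B : Finset S) :
    (#(A ∩ B) : ℝ) - #(B \ A) / 2 ≤ #A * pr A B := by
  have hA : (#(A ∩ B) : ℝ) + #(A \ B) = #A := by exact_mod_cast card_inter_add_card_sdiff A B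
  have hB : (#(A ∩ B) : ℝ) + #(B \ A) = #B := by
    rw [inter_comm]; exact_mod_cast card_inter_add_card_sdiff B A
  unfold pr
  rw [← hA, ← hB]
  set m : ℝ := ((#(A ∩ B) : ℕ) : ℝ)
  set e : ℝ := ((#(A \ B) : ℕ) : ℝ)
  set f : ℝ := ((#(B \ A) : ℕ) : ℝ)
  have hm : 0 ≤ m := by positivity
  have he : 0 ≤ e := by positivity
  have hf : 0 ≤ f := by positivity
  rcases (by positivity : 0 ≤ m + e + (m + f)).eq_or_lt with h | h
  · have hm0 : m = 0 := by linarith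
    have hf0 : f = 0 := by linarith
    simp [hm0, hf0]
  · rw [mul_div_assoc', le_div_iff₀ h]
    nlinarith [mul_nonneg hm he, mul_nonneg he hf]

lemma sum_card_sdiff_comm {s : Finset ι} {A B : ι → Finset S}
    (h : ∑ i ∈ s, #(A i) = ∑ i ∈ s, #(B i)) :
    ∑ i ∈ s, #(B i \ A i) = ∑ i ∈ s, #(A i \ B i) := by
  have hA : ∑ i ∈ s, #(A i \ B i) + ∑ i ∈ s, #(A i ∩ B i) = ∑ i ∈ s, #(A i) := by
    rw [← sum_add_distrib]; exact sum_congr rfl fun i _ => card_sdiff_add_card_inter _ _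
  have hB : ∑ i ∈ s, #(B i \ A i) + ∑ i ∈ s, #(A i ∩ B i) = ∑ i ∈ s, #(B i) := by
    rw [← sum_add_distrib]
    exact sum_congr rfl fun i _ => inter_comm (A i) (B i) ▸ card_sdiff_add_card_inter _ _
  omega

lemma sum_card_sub_three_halves_sum_card_sdiff_le {s : Finset ι} {A B : ι → Finset S}
    (h : ∑ i ∈ s, #(A i) = ∑ i ∈ s, #(B i)) :
    ∑ i ∈ s, (#(A i) : ℝ) - 3 / 2 * ∑ i ∈ s, (#(A i \ B i) : ℝ)
      ≤ ∑ i ∈ s, #(A i) * pr (A i) (B i) := by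
  have hinter : ∀ i, (#(A i ∩ B i) : ℝ) = #(A i) - #(A i \ B i) := fun i => by
    rw [eq_sub_iff_add_eq]; exact_mod_cast card_inter_add_card_sdiff (A i) (B i)
  have hsdiff : ∑ i ∈ s, (#(B i \ A i) : ℝ) = ∑ i ∈ s, (#(A i \ B i) : ℝ) := by
    exact_mod_cast sum_card_sdiff_comm h
  calc ∑ i ∈ s, (#(A i) : ℝ) - 3 / 2 * ∑ i ∈ s, (#(A i \ B i) : ℝ)
      = ∑ i ∈ s, ((#(A i ∩ B i) : ℝ) - #(B i \ A i) / 2) := by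
        simp only [hinter, sum_sub_distrib, ← sum_div, hsdiff]; ring
    _ ≤ ∑ i ∈ s, #(A i) * pr (A i) (B i) :=
        sum_le_sum fun i _ => card_inter_sub_half_card_sdiff_le_card_mul_pr (A i) (B i)

end

/-- If two `k`-clusterings of an `n`-point set are at distance `d` (fraction of
misclassified points under the optimal bijection of clusters), then the F-measure
satisfies `F(C, C') ≥ 1 - 3d/2`. -/
theorem f_measure_ge {S : Type*} [Fintype S] [DecidableEq S] (k : ℕ) (hk : 0 < k)
    (C C' : Fin k → Finset S)
    (hC : ∀ x : S, ∃! i, x ∈ C i) (hC' : ∀ x : S, ∃! i, x ∈ C' i)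
    (n : ℕ) (hn : Fintype.card S = n) (hnpos : 0 < n)
    (d : ℝ)
    (hdist : ∃ σ : Equiv.Perm (Fin k),
      (1 / (n : ℝ)) * ∑ i, ((C i \ C' (σ i)).card : ℝ) = d ∧
      ∀ τ : Equiv.Perm (Fin k),
        d ≤ (1 / (n : ℝ)) * ∑ i, ((C i \ C' (τ i)).card : ℝ)) :
    (1 / (n : ℝ)) * ∑ i, ((C i).card : ℝ) *
        (Finset.univ.sup' (@Finset.univ_nonempty (Fin k) _ (Fin.pos_iff_nonempty.mp hk)) fun j => pr (C i) (C' j))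
      ≥ 1 - 3 * d / 2 := by
  obtain ⟨σ, rfl, -⟩ := hdist
  have hCn : ∑ i, #(C i) = n := hn ▸ sum_card_eq_card_of_existsUnique_mem hC
  have hC'n : ∑ i, #(C' (σ i)) = n :=
    (Equiv.sum_comp σ fun j => #(C' j)).trans (hn ▸ sum_card_eq_card_of_existsUnique_mem hC')
  have hCR : ∑ i, (#(C i) : ℝ) = n := by exact_mod_cast hCn
  have hn0 : (n : ℝ) ≠ 0 := by positivity
  calc 1 / (n : ℝ) * ∑ i, #(C i) * (univ.sup' _ fun j => pr (C i) (C' j))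
      ≥ 1 / n * ∑ i, #(C i) * pr (C i) (C' (σ i)) := by
        gcongr with i; exact le_sup' (fun j => pr (C i) (C' j)) (mem_univ (σ i))
    _ ≥ 1 / n * (∑ i, (#(C i) : ℝ) - 3 / 2 * ∑ i, (#(C i \ C' (σ i)) : ℝ)) :=
        mul_le_mul_of_nonneg_left
          (sum_card_sub_three_halves_sum_card_sdiff_le (hCn.trans hC'n.symm)) (by positivity)
    _ = 1 - 3 * (1 / n * ∑ i, (#(C i \ C' (σ i)) : ℝ)) / 2 := by
        rw [hCR]; field_simp
end

section
/- Let (M,d) be a metric space, d_crit > 0, and X_1, …, X_k nonempty finite subsets of a finite set S ⊆ M such that (a) each X_i has diameter < 2·d_crit, (b) points in distinct X_i, X_j are at distance > 16·d_crit, and (c) |X_i| ≥ 2b for each i, where b ≥ |S \ (X_1 ∪ … ∪ X_k)|. Suppose L ⊆ S has the property that for each i there is a landmark within distance 2·d_crit of some point of X_i. Then any collection of closed balls of common radius r < 4·d_crit around landmarks in L, each ball containing more than b points of S, with the balls covering at least |S| - b points of S, induces a graph (vertices = balls, edges = overlapping balls) whose connected components each contain points from exactly one X_i, and distinct components correspond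 to distinct X_i when the graph has exactly k components. -/
open Metric

/-- The graph on a finite set `Λ` of landmarks where two distinct landmarks are
adjacent iff their closed balls of radius `r` overlap (on a point of `S`). -/
def ballGraph {M : Type*} [MetricSpace M] (S : Finset M) (Λ : Finset M) (r : ℝ) :
    SimpleGraph {l // l ∈ Λ} :=
  SimpleGraph.fromRel fun l₁ l₂ =>
    ∃ s ∈ S, s ∈ closedBall (l₁ : M) r ∧ s ∈ closedBall (l₂ : M) r

/-! If two balls of radius `r` overlap, every point of one lies within `4 r < 16 d_crit` of every
point of the other, so they cannot meet distinct good sets. Hence the good set met by a ball is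
unique and constant along edges, i.e. an invariant of the component. Every ball meets a good set
and every good set meets a ball, since each has more points than there are bad, respectively
uncovered, points; with exactly `k` components the induced surjection from components onto good
sets is therefore a bijection. -/

theorem Finset.exists_mem_of_card_sdiff_lt {α : Type*} [DecidableEq α] {s t u : Finset α}
    (hst : s ⊆ t) (h : (t \ u).card < s.card) : ∃ a ∈ s, a ∈ u := by
  by_contra! hsu
  have : s ⊆ t \ u := fun a ha => Finset.mem_sdiff.2 ⟨hst ha, hsu a ha⟩
  exact (Finset.card_le_card this).not_gt h

theorem index_eq_of_closedBall_overlap {M ι : Type*} [PseudoMetricSpace M] {X : ι → Set M}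
    {r : ℝ} (hsep : ∀ i j, i ≠ j → ∀ x ∈ X i, ∀ y ∈ X j, 4 * r < dist x y)
    {l₁ l₂ s x y : M} {i j : ι} (hs₁ : s ∈ closedBall l₁ r) (hs₂ : s ∈ closedBall l₂ r)
    (hx : x ∈ X i) (hx₁ : x ∈ closedBall l₁ r) (hy : y ∈ X j) (hy₂ : y ∈ closedBall l₂ r) :
    i = j := by
  by_contra hij
  rw [mem_closedBall] at hs₁ hs₂ hx₁ hy₂
  have hxy : dist x y ≤ 4 * r :=
    calc dist x y ≤ dist x l₁ + dist l₁ s + dist s y := dist_triangle4 _ _ _ _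
      _ ≤ dist x l₁ + dist s l₁ + (dist s l₂ + dist y l₂) := by
        rw [dist_comm l₁ s, dist_comm y l₂]
        gcongr
        exact dist_triangle _ _ _
      _ ≤ 4 * r := by linarith
  exact (hsep i j hij x hx y hy).not_ge hxy

theorem exists_mem_closedBall_of_ballGraph_adj {M : Type*} [MetricSpace M] {S Λ : Finset M}
    {r : ℝ} {l₁ l₂ : {l // l ∈ Λ}} (h : (ballGraph S Λ r).Adj l₁ l₂) :
    ∃ s ∈ S, s ∈ closedBall (l₁ : M) r ∧ s ∈ closedBall (l₂ : M) r := by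
  obtain ⟨-, ⟨s, hs, h₁, h₂⟩ | ⟨s, hs, h₂, h₁⟩⟩ := h
  exacts [⟨s, hs, h₁, h₂⟩, ⟨s, hs, h₁, h₂⟩]

namespace SimpleGraph

variable {V ι : Type*} {G : SimpleGraph V} {R : V → ι → Prop}

theorem Reachable.label_eq (htotal : ∀ v, ∃ i, R v i)
    (hadj : ∀ ⦃v w i j⦄, G.Adj v w → R v i → R w j → i = j)
    (hfun : ∀ ⦃v i j⦄, R v i → R v j → i = j) {v w : V} {i j : ι}
    (hvw : G.Reachable v w) (hi : R v i) (hj : R w j) : i = j := by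
  obtain ⟨p⟩ := hvw
  induction p generalizing i with
  | nil => exact hfun hi hj
  | cons h _ ih =>
    obtain ⟨k, hk⟩ := htotal _
    exact (hadj h hi hk).trans (ih hk hj)

theorem ConnectedComponent.existsUnique_label (htotal : ∀ v, ∃ i, R v i)
    (hadj : ∀ ⦃v w i j⦄, G.Adj v w → R v i → R w j → i = j)
    (hfun : ∀ ⦃v i j⦄, R v i → R v j → i = j) (c : G.ConnectedComponent) :
    ∃! i, ∃ v, G.connectedComponentMk v = c ∧ R v i := by
  induction c using ConnectedComponent.ind with | h v => ?_
  obtain ⟨i, hi⟩ := htotal v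
  refine ⟨i, ⟨v, rfl, hi⟩, ?_⟩
  rintro j ⟨w, hwv, hj⟩
  exact (ConnectedComponent.exact hwv).label_eq htotal hadj hfun hj hi

theorem connectedComponentMk_eq_of_label [Finite V] (htotal : ∀ v, ∃ i, R v i)
    (hadj : ∀ ⦃v w i j⦄, G.Adj v w → R v i → R w j → i = j)
    (hfun : ∀ ⦃v i j⦄, R v i → R v j → i = j) (hsurj : ∀ i, ∃ v, R v i)
    (hcard : Nat.card G.ConnectedComponent = Nat.card ι) {v w : V} {i : ι}
    (hv : R v i) (hw : R w i) : G.connectedComponentMk v = G.connectedComponentMk w := by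
  have hlabel := ConnectedComponent.existsUnique_label htotal hadj hfun
  choose label hlabel_spec using fun c => (hlabel c).exists
  have label_mk : ∀ {u j}, R u j → label (G.connectedComponentMk u) = j := fun hu =>
    (hlabel _).unique (hlabel_spec _) ⟨_, rfl, hu⟩
  have hbij : label.Bijective :=
    Function.Surjective.bijective_of_nat_card_le
      (fun j => (hsurj j).elim fun _ hu => ⟨_, label_mk hu⟩) hcard.le
  exact hbij.injective ((label_mk hv).trans (label_mk hw).symm)

end SimpleGraph

open Classical in
theorem expand_landmarks_components_general {M : Type*} [MetricSpace M] [DecidableEq M]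
    (d_crit : ℝ)
    (S : Finset M) (k b : ℕ) (X : Fin k → Finset M)
    (hXS : ∀ i, X i ⊆ S) (hXne : ∀ i, (X i).Nonempty)
    (hsep : ∀ i j, i ≠ j → ∀ x ∈ X i, ∀ y ∈ X j, dist x y > 16 * d_crit)
    (hsize : ∀ i, 2 * b ≤ (X i).card)
    (hbad : (S \ Finset.univ.biUnion X).card ≤ b)
    (r : ℝ) (hr : r < 4 * d_crit)
    (Λ : Finset M)
    (hballs : ∀ l ∈ Λ, b < (S.filter fun s => s ∈ closedBall l r).card)
    (hcover : (S.card : ℤ) - b ≤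
      ((S.filter fun s => ∃ l ∈ Λ, s ∈ closedBall l r).card : ℤ)) :
    (∀ comp : (ballGraph S Λ r).ConnectedComponent,
      ∃! i : Fin k, ∃ l : {l // l ∈ Λ},
        (ballGraph S Λ r).connectedComponentMk l = comp ∧
        ∃ x ∈ X i, x ∈ closedBall (l : M) r) ∧
    (Nat.card (ballGraph S Λ r).ConnectedComponent = k →
      ∀ comp₁ comp₂ : (ballGraph S Λ r).ConnectedComponent, ∀ i : Fin k,
        (∃ l : {l // l ∈ Λ}, (ballGraph S Λ r).connectedComponentMk l = comp₁ ∧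
          ∃ x ∈ X i, x ∈ closedBall (l : M) r) →
        (∃ l : {l // l ∈ Λ}, (ballGraph S Λ r).connectedComponentMk l = comp₂ ∧
          ∃ x ∈ X i, x ∈ closedBall (l : M) r) →
        comp₁ = comp₂) := by
  set G := ballGraph S Λ r
  set R : {l // l ∈ Λ} → Fin k → Prop := fun l i => ∃ x ∈ X i, x ∈ closedBall (l : M) r
  have hbig : ∀ i, b < (X i).card := fun i => by
    have := (hXne i).card_pos; have := hsize i; omega
  have hsep' : ∀ i j, i ≠ j → ∀ x ∈ X i, ∀ y ∈ X j, 4 * r < dist x y :=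
    fun i j hij x hx y hy => by linarith [hsep i j hij x hx y hy]
  have htotal : ∀ l, ∃ i, R l i := fun l => by
    obtain ⟨s, hs, hsX⟩ := Finset.exists_mem_of_card_sdiff_lt (Finset.filter_subset _ S)
      (hbad.trans_lt (hballs l l.2))
    obtain ⟨i, -, hi⟩ := Finset.mem_biUnion.1 hsX
    exact ⟨i, s, hi, (Finset.mem_filter.1 hs).2⟩
  have hsurj : ∀ i, ∃ l, R l i := fun i => by
    have huncovered : (S \ S.filter fun s => ∃ l ∈ Λ, s ∈ closedBall l r).card ≤ b := by
      rw [Finset.card_sdiff_of_subset (Finset.filter_subset _ S)]; omega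
    obtain ⟨x, hx, hxΛ⟩ := Finset.exists_mem_of_card_sdiff_lt (hXS i)
      (huncovered.trans_lt (hbig i))
    obtain ⟨l, hl, hxl⟩ := (Finset.mem_filter.1 hxΛ).2
    exact ⟨⟨l, hl⟩, x, hx, hxl⟩
  have hadj : ∀ ⦃l₁ l₂ i j⦄, G.Adj l₁ l₂ → R l₁ i → R l₂ j → i = j := by
    rintro l₁ l₂ i j hl ⟨x, hx, hx₁⟩ ⟨y, hy, hy₂⟩
    obtain ⟨s, -, hs₁, hs₂⟩ := exists_mem_closedBall_of_ballGraph_adj hl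
    exact index_eq_of_closedBall_overlap (X := fun i => (X i : Set M)) hsep' hs₁ hs₂ hx hx₁ hy hy₂
  have hfun : ∀ ⦃l i j⦄, R l i → R l j → i = j := by
    rintro l i j ⟨x, hx, hxl⟩ ⟨y, hy, hyl⟩
    exact index_eq_of_closedBall_overlap (X := fun i => (X i : Set M)) hsep' hxl hxl hx hxl hy hyl
  refine ⟨SimpleGraph.ConnectedComponent.existsUnique_label htotal hadj hfun, ?_⟩
  rintro hcard _ _ i ⟨l₁, rfl, h₁⟩ ⟨l₂, rfl, h₂⟩
  exact SimpleGraph.connectedComponentMk_eq_of_label htotal hadj hfun hsurj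
    (hcard.trans (Nat.card_fin k).symm) h₁ h₂

open Classical in
/-- Correctness of Expand-Landmarks: with well-separated good sets of diameter
`< 2 d_crit` and size at least `2b`, at most `b` bad points, and balls of radius
`r < 4 d_crit` around landmarks, each ball containing more than `b` points of `S` and
the balls covering all but at most `b` points of `S`, every connected component of the
ball-overlap graph contains points from exactly one good set, and when there are
exactly `k` components, distinct components correspond to distinct good sets. -/
theorem expand_landmarks_components {M : Type*} [MetricSpace M] [DecidableEq M]
    (d_crit : ℝ) (hd : 0 < d_crit)
    (S : Finset M) (k b : ℕ) (X : Fin k → Finset M)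
    (hXS : ∀ i, X i ⊆ S) (hXne : ∀ i, (X i).Nonempty)
    (hdiam : ∀ i, ∀ x ∈ X i, ∀ y ∈ X i, dist x y < 2 * d_crit)
    (hsep : ∀ i j, i ≠ j → ∀ x ∈ X i, ∀ y ∈ X j, dist x y > 16 * d_crit)
    (hsize : ∀ i, 2 * b ≤ (X i).card)
    (hbad : (S \ Finset.univ.biUnion X).card ≤ b)
    (L : Set M) (hland : ∀ i, ∃ l ∈ L, ∃ x ∈ X i, dist l x < 2 * d_crit)
    (r : ℝ) (hrpos : 0 ≤ r) (hr : r < 4 * d_crit)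
    (Λ : Finset M) (hΛL : (Λ : Set M) ⊆ L)
    (hballs : ∀ l ∈ Λ, b < (S.filter fun s => s ∈ closedBall l r).card)
    (hcover : (S.card : ℤ) - b ≤
      ((S.filter fun s => ∃ l ∈ Λ, s ∈ closedBall l r).card : ℤ)) :
    (∀ comp : (ballGraph S Λ r).ConnectedComponent,
      ∃! i : Fin k, ∃ l : {l // l ∈ Λ},
        (ballGraph S Λ r).connectedComponentMk l = comp ∧
        ∃ x ∈ X i, x ∈ closedBall (l : M) r) ∧
    (Nat.card (ballGraph S Λ r).ConnectedComponent = k →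
      ∀ comp₁ comp₂ : (ballGraph S Λ r).ConnectedComponent, ∀ i : Fin k,
        (∃ l : {l // l ∈ Λ}, (ballGraph S Λ r).connectedComponentMk l = comp₁ ∧
          ∃ x ∈ X i, x ∈ closedBall (l : M) r) →
        (∃ l : {l // l ∈ Λ}, (ballGraph S Λ r).connectedComponentMk l = comp₂ ∧
          ∃ x ∈ X i, x ∈ closedBall (l : M) r) →
        comp₁ = comp₂) :=
  expand_landmarks_components_general d_crit S k b X hXS hXne hsep hsize hbad r hr Λ hballs hcover
end

section
/- Let S be a finite set of size n and suppose the number of 'bad' points in S is at most b. If L ⊆ S contains k distinct good points chosen so that when each good point y was selected, at least n - 2b + 1 points s ∈ S satisfied min_{l ∈ L_before} d(l, s) ≤ min_{l ∈ L_before} d(l, y), and each good set X_i has |X_i| ≥ 2b, then either the k good points lie in k distinct good sets, or there is a landmark within distance 2·d_crit of some point in each good set. -/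
/-!
If two selected good points `ℓ j₁`, `ℓ j₂` with `j₁ < j₂` lie in the same good set, then when
`ℓ j₂` was selected some earlier landmark was within `2 * d_crit` of it. At least `n - 2b + 1`
points of `S` were then at most as far from the landmarks as `ℓ j₂`, so this set meets every
good set (of size `≥ 2b`), and each of its points is within `2 * d_crit` of a landmark.
-/

theorem Finset.exists_lt_of_inf'_le_of_lt {ι α : Type*} [LinearOrder α] {F : Finset ι}
    (hF : F.Nonempty) {f g : ι → α} (hfg : F.inf' hF f ≤ F.inf' hF g) {a : ι} (ha : a ∈ F)
    {r : α} (hr : g a < r) : ∃ t ∈ F, f t < r := by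
  obtain ⟨t, htF, ht⟩ := F.exists_mem_eq_inf' hF f
  exact ⟨t, htF, ht ▸ hfg.trans_lt ((F.inf'_le g ha).trans_lt hr)⟩

theorem exists_landmark_dist_lt_of_card_lt {M ι : Type*} [PseudoMetricSpace M]
    {F : Finset ι} (hF : F.Nonempty) (ℓ : ι → M) {S X : Finset M} {y : M} (hXS : X ⊆ S)
    (hcard : S.card < X.card +
      (S.filter fun s => F.inf' hF (fun t => dist (ℓ t) s) ≤
        F.inf' hF (fun t => dist (ℓ t) y)).card)
    {a : ι} (ha : a ∈ F) {r : ℝ} (hr : dist (ℓ a) y < r) :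
    ∃ t ∈ F, ∃ x ∈ X, dist (ℓ t) x < r := by
  classical
  obtain ⟨x, hx⟩ := Finset.inter_nonempty_of_card_lt_card_add_card hXS
    (Finset.filter_subset _ S) hcard
  obtain ⟨hxX, hxA⟩ := Finset.mem_inter.mp hx
  obtain ⟨t, htF, ht⟩ := F.exists_lt_of_inf'_le_of_lt hF (Finset.mem_filter.mp hxA).2 ha hr
  exact ⟨t, htF, x, hxX, ht⟩

theorem landmark_selection_covers_general {M : Type*} [MetricSpace M]
    (d_crit : ℝ)
    (S : Finset M) (n : ℕ) (hn : S.card = n)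
    (k b : ℕ) (X : Fin k → Finset M)
    (hXS : ∀ i, X i ⊆ S)
    (hdiam : ∀ i, ∀ x ∈ X i, ∀ y ∈ X i, dist x y < 2 * d_crit)
    (hsize : ∀ i, 2 * b ≤ (X i).card)
    (T : ℕ) (ℓ : Fin T → M)
    (J : Finset (Fin T))
    (hselect : ∀ j ∈ J, ∀ hne : (Finset.univ.filter fun t => t < j).Nonempty,
      (n : ℤ) - 2 * b + 1 ≤
        ((S.filter fun s =>
            ((Finset.univ.filter fun t => t < j).inf' hne fun t => dist (ℓ t) s) ≤
            ((Finset.univ.filter fun t => t < j).inf' hne fun t => dist (ℓ t) (ℓ j))).card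
          : ℤ)) :
    (∀ j₁ ∈ J, ∀ j₂ ∈ J, ∀ i, ℓ j₁ ∈ X i → ℓ j₂ ∈ X i → j₁ = j₂) ∨
    (∀ i : Fin k, ∃ t : Fin T, ∃ x ∈ X i, dist (ℓ t) x < 2 * d_crit) := by
  refine or_iff_not_imp_left.mpr fun hsep i' => ?_
  push Not at hsep
  obtain ⟨j₁, hj₁, j₂, hj₂, i, hx₁, hx₂, hne⟩ := hsep
  wlog hlt : j₁ < j₂ generalizing j₁ j₂
  · exact this j₂ hj₂ j₁ hj₁ hx₂ hx₁ hne.symm (lt_of_le_of_ne (not_lt.mp hlt) hne.symm)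
  have hj₁F : j₁ ∈ Finset.univ.filter fun t => t < j₂ := by simpa using hlt
  have hcard := hselect j₂ hj₂ ⟨j₁, hj₁F⟩
  obtain ⟨t, -, x, hx, hdist⟩ := exists_landmark_dist_lt_of_card_lt ⟨j₁, hj₁F⟩ ℓ (hXS i')
    (by have := hsize i'; omega) hj₁F (hdiam i _ hx₁ _ hx₂)
  exact ⟨t, x, hx, hdist⟩

/-- If `k` distinct good points are selected as landmarks so that each selected good
point was among the `2b` farthest points from the previously chosen landmarks, and each
good set has at least `2b` points, then either the `k` selected good points lie in `k`
distinct good sets, or there is a landmark within `2 * d_crit` of some point in each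
good set. -/
theorem landmark_selection_covers {M : Type*} [MetricSpace M] [DecidableEq M]
    (d_crit : ℝ) (hd : 0 < d_crit)
    (S : Finset M) (n : ℕ) (hn : S.card = n)
    (k b : ℕ) (X : Fin k → Finset M)
    (hXS : ∀ i, X i ⊆ S)
    (hdiam : ∀ i, ∀ x ∈ X i, ∀ y ∈ X i, dist x y < 2 * d_crit)
    (hsize : ∀ i, 2 * b ≤ (X i).card)
    (hbad : (S \ Finset.univ.biUnion X).card ≤ b)
    (T : ℕ) (ℓ : Fin T → M) (hℓS : ∀ t, ℓ t ∈ S)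
    (J : Finset (Fin T)) (hJcard : J.card = k)
    (hgood : ∀ j ∈ J, ∃ i, ℓ j ∈ X i)
    (hdistinct : ∀ j₁ ∈ J, ∀ j₂ ∈ J, ℓ j₁ = ℓ j₂ → j₁ = j₂)
    (hselect : ∀ j ∈ J, ∀ hne : (Finset.univ.filter fun t => t < j).Nonempty,
      (n : ℤ) - 2 * b + 1 ≤
        ((S.filter fun s =>
            ((Finset.univ.filter fun t => t < j).inf' hne fun t => dist (ℓ t) s) ≤
            ((Finset.univ.filter fun t => t < j).inf' hne fun t => dist (ℓ t) (ℓ j))).card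
          : ℤ)) :
    (∀ j₁ ∈ J, ∀ j₂ ∈ J, ∀ i, ℓ j₁ ∈ X i → ℓ j₂ ∈ X i → j₁ = j₂) ∨
    (∀ i : Fin k, ∃ t : Fin T, ∃ x ∈ X i, dist (ℓ t) x < 2 * d_crit) :=
  landmark_selection_covers_general d_crit S n hn k b X hXS hdiam hsize T ℓ J hselect
end
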